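/- For δ ∈ (0,1) set kᶜ(δ) := k₊(1−δ) = √((2+√(1+3δ))/3), let μᵗ(δ) be the unique μ > −1 with −2(1 + μ + √(1+μ)) + G(kᶜ(δ); 1−δ) = 0, and set uᵗ(δ) := 1 + √(1+μᵗ(δ)). Then, as δ → 0⁺: (kᶜ(δ) − 1)/δ → 1/4, (μᵗ(δ) + 1)/δ² → 1/4, (uᵗ(δ) − 1)/δ → 1/2, and F_u(uᵗ(δ); μᵗ(δ))/δ → −1. (That is, kᶜ = 1 + δ/4 + o(δ), μᵗ = −1 + δ²/4 + o(δ²), uᵗ = 1 + δ/2 + o(δ), and F_u(uᵗ;μᵗ) = −δ + o(δ).) -/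

import Mathlib

open Filter Topology

/-- F_u(u;μ) = μ + 4u − 3u². -/
noncomputable def Fu (u μ : ℝ) : ℝ := μ + 4 * u - 3 * u ^ 2

/-- G(k;ν) = −νk² + 2k⁴ − k⁶. -/
noncomputable def G (k ν : ℝ) : ℝ := -ν * k ^ 2 + 2 * k ^ 4 - k ^ 6

/-- kᶜ(δ) = k₊(1−δ) = √((2+√(1+3δ))/3). -/
noncomputable def kc (δ : ℝ) : ℝ := Real.sqrt ((2 + Real.sqrt (1 + 3 * δ)) / 3)

/-!
Write `r = √(1+3δ)`, so that `kᶜ(δ)² = (2+r)/3` and `δ = (r²−1)/3`. Substituting,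
`G(kᶜ(δ);1−δ) = 2(r+2)²(r−1)/27 = δ · 2(r+2)²/(9(r+1))`, and likewise
`kᶜ(δ) − 1 = δ / ((r+1)(kᶜ(δ)+1))`; the cofactors of `δ` are continuous, so
`(kᶜ(δ)−1)/δ → 1/4` and `G(kᶜ(δ);1−δ)/δ → 1`. With `s = √(1+μᵗ)` the defining equation reads
`2s(s+1) = G(kᶜ(δ);1−δ)`, so `s → 0` and `s/δ → 1/2`; moreover `1 + μᵗ = s²`, `uᵗ − 1 = s`, and
`F_u(uᵗ;μᵗ) = −2s(s+1) = −G(kᶜ(δ);1−δ)`.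
-/

lemma tendsto_div_nhdsGT_zero_of_eq_mul {f g : ℝ → ℝ} (hfg : ∀ δ, 0 < δ → f δ = δ * g δ)
    (hg : ContinuousAt g 0) : Tendsto (fun δ => f δ / δ) (𝓝[>] 0) (𝓝 (g 0)) := by
  refine (hg.tendsto.mono_left nhdsWithin_le_nhds).congr' ?_
  filter_upwards [self_mem_nhdsWithin] with δ (hδ : 0 < δ)
  rw [hfg δ hδ, mul_div_cancel_left₀ _ hδ.ne']

lemma tendsto_nhdsGT_zero_of_eq_mul {f g : ℝ → ℝ} (hfg : ∀ δ, 0 < δ → f δ = δ * g δ)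
    (hg : ContinuousAt g 0) : Tendsto f (𝓝[>] 0) (𝓝 0) := by
  have hlim : Tendsto (fun δ => δ * g δ) (𝓝 0) (𝓝 (0 * g 0)) := tendsto_id.mul hg.tendsto
  rw [zero_mul] at hlim
  refine (hlim.mono_left nhdsWithin_le_nhds).congr' ?_
  filter_upwards [self_mem_nhdsWithin] with δ (hδ : 0 < δ)
  exact (hfg δ hδ).symm

lemma kc_sq (δ : ℝ) : kc δ ^ 2 = (2 + Real.sqrt (1 + 3 * δ)) / 3 :=
  Real.sq_sqrt (by positivity)

lemma kc_sub_one_eq {δ : ℝ} (hδ : 0 ≤ 1 + 3 * δ) :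
    kc δ - 1 = δ * (1 / ((Real.sqrt (1 + 3 * δ) + 1) * (kc δ + 1))) := by
  have hk2 := kc_sq δ
  have hr2 := Real.sq_sqrt hδ
  have hk : 0 ≤ kc δ := Real.sqrt_nonneg _
  set r := Real.sqrt (1 + 3 * δ)
  have hr : 0 ≤ r := Real.sqrt_nonneg _
  field_simp
  linear_combination (r + 1) * hk2 + hr2 / 3

lemma G_kc_eq {δ : ℝ} (hδ : 0 ≤ 1 + 3 * δ) :
    G (kc δ) (1 - δ) =
      δ * (2 * (Real.sqrt (1 + 3 * δ) + 2) ^ 2 / (9 * (Real.sqrt (1 + 3 * δ) + 1))) := by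
  have hk2 := kc_sq δ
  have hr2 := Real.sq_sqrt hδ
  set r := Real.sqrt (1 + 3 * δ)
  have hr : 0 ≤ r := Real.sqrt_nonneg _
  have hδr : δ = (r ^ 2 - 1) / 3 := by linarith
  rw [G, show kc δ ^ 4 = (kc δ ^ 2) ^ 2 by ring, show kc δ ^ 6 = (kc δ ^ 2) ^ 3 by ring, hk2, hδr]
  field_simp
  ring

lemma kc_zero : kc 0 = 1 := by
  norm_num [kc]

lemma tendsto_kc_sub_one_div : Tendsto (fun δ => (kc δ - 1) / δ) (𝓝[>] 0) (𝓝 (1 / 4)) := by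
  have hg : ContinuousAt (fun δ => 1 / ((Real.sqrt (1 + 3 * δ) + 1) * (kc δ + 1))) 0 := by
    unfold kc
    fun_prop (disch := positivity)
  convert tendsto_div_nhdsGT_zero_of_eq_mul (fun δ hδ => kc_sub_one_eq (by linarith)) hg using 2
  norm_num [kc_zero]

lemma tendsto_G_kc_div : Tendsto (fun δ => G (kc δ) (1 - δ) / δ) (𝓝[>] 0) (𝓝 1) := by
  convert tendsto_div_nhdsGT_zero_of_eq_mul (fun δ hδ => G_kc_eq (by linarith))
    (by fun_prop (disch := positivity)) using 2
  norm_num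

lemma tendsto_G_kc : Tendsto (fun δ => G (kc δ) (1 - δ)) (𝓝[>] 0) (𝓝 0) :=
  tendsto_nhdsGT_zero_of_eq_mul (fun δ hδ => G_kc_eq (by linarith))
    (by fun_prop (disch := positivity))

lemma Fu_one_add_sqrt {μ : ℝ} (hμ : -1 ≤ μ) :
    Fu (1 + Real.sqrt (1 + μ)) μ = -2 * (1 + μ + Real.sqrt (1 + μ)) := by
  have hs := Real.sq_sqrt (show 0 ≤ 1 + μ by linarith)
  rw [Fu]
  linear_combination (-3) * hs

lemma tendsto_div_of_two_mul_mul_add_one_eq {α : Type*} {l : Filter α} {s h d : α → ℝ} {L : ℝ}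
    (hs : ∀ᶠ x in l, 0 ≤ s x) (hsh : ∀ᶠ x in l, 2 * s x * (s x + 1) = h x)
    (hh : Tendsto h l (𝓝 0)) (hhd : Tendsto (fun x => h x / d x) l (𝓝 L)) :
    Tendsto (fun x => s x / d x) l (𝓝 (L / 2)) := by
  have hs_le : ∀ᶠ x in l, s x ≤ h x / 2 := by
    filter_upwards [hs, hsh] with x hx hxh
    nlinarith
  have hs_zero : Tendsto s l (𝓝 0) := by
    refine tendsto_of_tendsto_of_tendsto_of_le_of_le' tendsto_const_nhds ?_ hs hs_le
    simpa using hh.div_const 2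
  have hlim : Tendsto (fun x => h x / d x / (2 * (s x + 1))) l (𝓝 (L / (2 * (0 + 1)))) :=
    hhd.div ((hs_zero.add_const 1).const_mul 2) (by norm_num)
  rw [zero_add, mul_one] at hlim
  refine hlim.congr' ?_
  filter_upwards [hs, hsh] with x hx hxh
  rw [← hxh]
  field_simp

/-- with μᵗ(δ) the unique μ > −1 such that
−2(1 + μ + √(1+μ)) + G(kᶜ(δ);1−δ) = 0 and uᵗ(δ) = 1 + √(1+μᵗ(δ)), as δ → 0⁺:
(kᶜ−1)/δ → 1/4, (μᵗ+1)/δ² → 1/4, (uᵗ−1)/δ → 1/2, F_u(uᵗ;μᵗ)/δ → −1. -/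
theorem turing_point_asymptotics (μt : ℝ → ℝ)
    (hμt : ∀ δ : ℝ, 0 < δ → δ < 1 →
      -1 < μt δ ∧
      -2 * (1 + μt δ + Real.sqrt (1 + μt δ)) + G (kc δ) (1 - δ) = 0)
    (ut : ℝ → ℝ) (hut : ∀ δ : ℝ, ut δ = 1 + Real.sqrt (1 + μt δ)) :
    Tendsto (fun δ => (kc δ - 1) / δ) (𝓝[>] 0) (𝓝 (1 / 4)) ∧
    Tendsto (fun δ => (μt δ + 1) / δ ^ 2) (𝓝[>] 0) (𝓝 (1 / 4)) ∧
    Tendsto (fun δ => (ut δ - 1) / δ) (𝓝[>] 0) (𝓝 (1 / 2)) ∧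
    Tendsto (fun δ => Fu (ut δ) (μt δ) / δ) (𝓝[>] 0) (𝓝 (-1)) := by
  have hturing : ∀ᶠ δ in 𝓝[>] (0 : ℝ), -1 < μt δ ∧
      -2 * (1 + μt δ + Real.sqrt (1 + μt δ)) + G (kc δ) (1 - δ) = 0 := by
    filter_upwards [Ioo_mem_nhdsGT (show (0 : ℝ) < 1 by norm_num)] with δ hδ
    exact hμt δ hδ.1 hδ.2
  have hsq : ∀ᶠ δ in 𝓝[>] (0 : ℝ), Real.sqrt (1 + μt δ) ^ 2 = 1 + μt δ := by
    filter_upwards [hturing] with δ hδ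
    exact Real.sq_sqrt (by linarith [hδ.1])
  have hsqrt_div : Tendsto (fun δ => Real.sqrt (1 + μt δ) / δ) (𝓝[>] 0) (𝓝 (1 / 2)) := by
    refine tendsto_div_of_two_mul_mul_add_one_eq (.of_forall fun δ => Real.sqrt_nonneg _) ?_
      tendsto_G_kc tendsto_G_kc_div
    filter_upwards [hturing, hsq] with δ hδ hδsq
    linear_combination -hδ.2 + 2 * hδsq
  refine ⟨tendsto_kc_sub_one_div, ?_, ?_, ?_⟩
  · rw [show (1 / 4 : ℝ) = (1 / 2) ^ 2 by norm_num]
    refine (hsqrt_div.pow 2).congr' ?_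
    filter_upwards [hsq] with δ hδsq
    rw [div_pow, hδsq, add_comm]
  · simpa [hut] using hsqrt_div
  · refine tendsto_G_kc_div.neg.congr' ?_
    filter_upwards [hturing] with δ hδ
    rw [hut, Fu_one_add_sqrt hδ.1.le]
    linear_combination -hδ.2 / δ
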